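/- One-dimensionality of the deficiency space on the half-line in the subcritical range (core of Proposition 3.4(iii)): Let α ∈ (−1/2, 1/2). Consider the set S of continuously differentiable functions f = (f₁,f₂) : (0,∞) → ℂ² with ∫₀^∞ |f(x)|²_{ℂ²} dx < ∞ satisfying f₂'(x) + (α/x) f₂(x) = i f₁(x) and −f₁'(x) + (α/x) f₁(x) = i f₂(x) for all x > 0. Then S is a one-dimensional complex vector space: S contains a nonzero element, and any two elements of S are linearly dependent over ℂ. -/

import Mathlib

open MeasureTheory Real Set

noncomputable section

/-- Membership in the deficiency space `S = ker(T_α − i)` of the maximal operator associated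
with `τ_α` on `L²((0,∞); ℂ²)`: `f = (f₁,f₂)` is continuously differentiable on `(0,∞)`,
square-integrable, and solves `τ_α f = i f` there. -/
def MemDeficiency (α : ℝ) (f₁ f₂ : ℝ → ℂ) : Prop :=
  ContDiffOn ℝ 1 f₁ (Ioi 0) ∧ ContDiffOn ℝ 1 f₂ (Ioi 0)
    ∧ IntegrableOn (fun x => ‖f₁ x‖ ^ 2 + ‖f₂ x‖ ^ 2) (Ioi 0)
    ∧ ∀ x ∈ Ioi (0 : ℝ),
        deriv f₂ x + ((α / x : ℝ) : ℂ) * f₂ x = Complex.I * f₁ x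
        ∧ -deriv f₁ x + ((α / x : ℝ) : ℂ) * f₁ x = Complex.I * f₂ x

/-! The deficiency space is spanned by `(√x K_{1/2-α}(x), -i √x K_{1/2+α}(x))`. With
`K_ν(x) = ∫₀^∞ e^{-x cosh t} cosh (ν t) dt`, differentiating under the integral and integrating by
parts give `K_ν' = -(ν/x) K_ν - K_{1-ν}`, which makes this pair a solution; the bounds
`K_ν(x) ≤ C x^{-s}` near `0` (any `s ∈ (|ν|, 1]`) and `K_ν(x) ≤ e^{1-x} K_ν(1)` for `x ≥ 1` make it
square integrable since `|1/2 ± α| < 1`.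

Conversely, the Wronskian `f₁ g₂ - f₂ g₁` of two solutions is constant and, as a product of `L²`
functions, integrable on `(0,∞)`, hence zero. So at a point where `g ≠ 0` some `f - c g` vanishes,
and by uniqueness for the linear system (Lipschitz away from `x = 0`) it vanishes identically. -/

open Filter Topology

lemma sq_div_four_le_cosh (t : ℝ) : t ^ 2 / 4 ≤ cosh t := by
  rw [← cosh_abs, ← sq_abs, cosh_eq]
  nlinarith [quadratic_le_exp_of_nonneg (abs_nonneg t), exp_pos (-|t|), abs_nonneg t]

lemma cosh_le_exp_abs (t : ℝ) : cosh t ≤ exp |t| := by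
  rw [← cosh_abs, cosh_eq]
  linarith [exp_le_exp.2 (show -|t| ≤ |t| by linarith [abs_nonneg t])]

lemma cosh_mul_le_exp {t : ℝ} (ν : ℝ) (ht : 0 ≤ t) : cosh (ν * t) ≤ exp (|ν| * t) :=
  (cosh_le_exp_abs _).trans_eq (by rw [abs_mul, abs_of_nonneg ht])

lemma abs_sinh_mul_le_exp {t : ℝ} (ν : ℝ) (ht : 0 ≤ t) : |sinh (ν * t)| ≤ exp (|ν| * t) := by
  rw [abs_sinh]
  exact (sinh_lt_cosh _).le.trans ((cosh_abs _).trans_le (cosh_mul_le_exp ν ht))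

lemma integrable_exp_mul_sub_mul_cosh (c : ℝ) {x : ℝ} (hx : 0 < x) :
    Integrable fun t => exp (c * t - x * cosh t) := by
  refine ((integrable_exp_neg_mul_sq (b := x / 8) (by positivity)).const_mul
    (exp (2 * c ^ 2 / x))).mono' (by fun_prop) (ae_of_all _ fun t => ?_)
  rw [norm_of_nonneg (exp_pos _).le, ← exp_add, exp_le_exp, ← sub_nonneg]
  -- completing the square, with `cosh t ≥ t²/4`
  have key : 2 * c ^ 2 / x + -(x / 8) * t ^ 2 - (c * t - x * cosh t)
      = (2 * (c - x * t / 4) ^ 2 + x ^ 2 * (cosh t - t ^ 2 / 4)) / x := by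
    field_simp
    ring
  rw [key]
  have := sq_div_four_le_cosh t
  positivity

lemma integrableOn_exp_neg_mul_cosh_mul {g : ℝ → ℝ} (hg : Continuous g) {c x : ℝ} (hx : 0 < x)
    (hgc : ∀ t, 0 < t → |g t| ≤ exp (c * t)) :
    IntegrableOn (fun t => exp (-x * cosh t) * g t) (Ioi 0) := by
  refine (integrable_exp_mul_sub_mul_cosh c hx).integrableOn.mono' (by fun_prop) <|
    (ae_restrict_iff' measurableSet_Ioi).2 <| ae_of_all _ fun t ht => ?_
  rw [norm_mul, norm_of_nonneg (exp_pos _).le, Real.norm_eq_abs, sub_eq_neg_add, exp_add, neg_mul]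
  exact mul_le_mul_of_nonneg_left (hgc t ht) (exp_pos _).le

/-- The modified Bessel function of the second kind, through its integral representation. -/
def besselK (ν x : ℝ) : ℝ := ∫ t in Ioi 0, exp (-x * cosh t) * cosh (ν * t)

lemma integrableOn_besselK_integrand (ν : ℝ) {x : ℝ} (hx : 0 < x) :
    IntegrableOn (fun t => exp (-x * cosh t) * cosh (ν * t)) (Ioi 0) :=
  integrableOn_exp_neg_mul_cosh_mul (by fun_prop) hx fun t ht =>
    (abs_of_pos (cosh_pos _)).trans_le (cosh_mul_le_exp ν ht.le)

lemma besselK_pos (ν : ℝ) {x : ℝ} (hx : 0 < x) : 0 < besselK ν x := by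
  refine (setIntegral_pos_iff_support_of_nonneg_ae (ae_of_all _ fun t => by positivity)
    (integrableOn_besselK_integrand ν hx)).2 ?_
  have : Function.support (fun t => exp (-x * cosh t) * cosh (ν * t)) = univ :=
    Function.support_eq_univ fun t => by positivity
  rw [this, univ_inter]
  simp

lemma integrableOn_exp_neg_mul_cosh_mul_sinh_mul_sinh (ν : ℝ) {x : ℝ} (hx : 0 < x) :
    IntegrableOn (fun t => exp (-x * cosh t) * (sinh t * sinh (ν * t))) (Ioi 0) := by
  refine integrableOn_exp_neg_mul_cosh_mul (c := 1 + |ν|) (by fun_prop) hx fun t ht => ?_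
  rw [abs_mul, add_mul, exp_add]
  exact mul_le_mul (by simpa using abs_sinh_mul_le_exp 1 ht.le) (abs_sinh_mul_le_exp ν ht.le)
    (abs_nonneg _) (exp_pos _).le

/-- Integration by parts against `exp (-x cosh t) sinh (ν t)`, which vanishes at both ends. -/
lemma mul_integral_sinh_mul_sinh_eq (ν : ℝ) {x : ℝ} (hx : 0 < x) :
    x * ∫ t in Ioi 0, exp (-x * cosh t) * (sinh t * sinh (ν * t)) = ν * besselK ν x := by
  set u : ℝ → ℝ := fun t => exp (-x * cosh t) * sinh (ν * t)
  set u' : ℝ → ℝ := fun t =>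
    ν * (exp (-x * cosh t) * cosh (ν * t)) - x * (exp (-x * cosh t) * (sinh t * sinh (ν * t)))
  have hu : ∀ t, HasDerivAt u (u' t) t := fun t => by
    refine ((((hasDerivAt_cosh t).const_mul (-x)).exp).mul
      ((hasDerivAt_sinh (ν * t)).comp t ((hasDerivAt_id t).const_mul ν))).congr_deriv ?_
    simp only [u', Function.comp]
    ring
  have hu'_int : IntegrableOn u' (Ioi 0) :=
    ((integrableOn_besselK_integrand ν hx).const_mul ν).sub
      ((integrableOn_exp_neg_mul_cosh_mul_sinh_mul_sinh ν hx).const_mul x)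
  have hu_int : IntegrableOn u (Ioi 0) :=
    integrableOn_exp_neg_mul_cosh_mul (by fun_prop) hx fun t ht => abs_sinh_mul_le_exp ν ht.le
  have hu_lim : Tendsto u atTop (𝓝 0) :=
    tendsto_zero_of_hasDerivAt_of_integrableOn_Ioi (fun t _ => hu t) hu'_int hu_int
  have h := integral_Ioi_of_hasDerivAt_of_tendsto' (fun t _ => hu t) hu'_int hu_lim
  rw [integral_sub ((integrableOn_besselK_integrand ν hx).const_mul ν)
    ((integrableOn_exp_neg_mul_cosh_mul_sinh_mul_sinh ν hx).const_mul x), integral_const_mul,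
    integral_const_mul] at h
  simp only [u, mul_zero, sinh_zero, sub_zero] at h
  rw [besselK]
  linarith

lemma hasDerivAt_besselK (ν : ℝ) {x : ℝ} (hx : 0 < x) :
    HasDerivAt (besselK ν) (-(ν / x) * besselK ν x - besselK (1 - ν) x) x := by
  set F : ℝ → ℝ → ℝ := fun y t => exp (-y * cosh t) * cosh (ν * t)
  set F' : ℝ → ℝ → ℝ := fun y t => -(exp (-y * cosh t) * (cosh t * cosh (ν * t)))
  have hF' : ∀ t, ∀ y, HasDerivAt (fun y => F y t) (F' y t) y := fun t y => by
    refine ((((hasDerivAt_id y).neg.mul_const (cosh t)).exp).mul_const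
      (cosh (ν * t))).congr_deriv ?_
    simp only [F', Pi.neg_apply, id]
    ring
  have hbound_int := integrableOn_exp_neg_mul_cosh_mul (c := 1 + |ν|)
    (g := fun t => exp ((1 + |ν|) * t)) (by fun_prop) (half_pos hx)
    fun t _ => (abs_of_pos (exp_pos _)).le
  -- domination, uniform in `y > x / 2`, for differentiating under the integral sign
  have hbound : ∀ t ∈ Ioi (0 : ℝ), ∀ y ∈ Ioi (x / 2),
      ‖F' y t‖ ≤ exp (-(x / 2) * cosh t) * exp ((1 + |ν|) * t) := fun t ht y hy => by
    rw [norm_neg, norm_mul, norm_of_nonneg (exp_pos _).le, norm_mul,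
      norm_of_nonneg (cosh_pos _).le, norm_of_nonneg (cosh_pos _).le, add_mul, exp_add]
    gcongr
    · nlinarith [cosh_pos t, mem_Ioi.1 hy]
    · simpa using cosh_mul_le_exp 1 ht.le
    · exact cosh_mul_le_exp ν ht.le
  have key := hasDerivAt_integral_of_dominated_loc_of_deriv_le (F := F) (F' := F')
    (Ioi_mem_nhds (half_lt_self hx)) (Eventually.of_forall fun y => by fun_prop)
    (integrableOn_besselK_integrand ν hx) (by fun_prop)
    ((ae_restrict_iff' measurableSet_Ioi).2 (ae_of_all _ hbound)) hbound_int
    (ae_of_all _ fun t y _ => hF' t y)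
  refine key.2.congr_deriv ?_
  have hsplit : ∀ t, F' x t = -(exp (-x * cosh t) * (sinh t * sinh (ν * t))
      + exp (-x * cosh t) * cosh ((1 - ν) * t)) := fun t => by
    simp only [F', sub_mul, one_mul, cosh_sub]
    ring
  rw [integral_congr_ae (ae_of_all _ hsplit), integral_neg,
    integral_add (integrableOn_exp_neg_mul_cosh_mul_sinh_mul_sinh ν hx)
    (integrableOn_besselK_integrand (1 - ν) hx), ← besselK,
    eq_div_of_mul_eq hx.ne' ((mul_comm _ _).trans (mul_integral_sinh_mul_sinh_eq ν hx))]
  ring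

lemma exp_neg_le_rpow_neg {u s : ℝ} (hu : 0 < u) (hs₀ : 0 ≤ s) (hs₁ : s ≤ 1) :
    exp (-u) ≤ u ^ (-s) := by
  rw [rpow_neg hu.le, exp_neg]
  refine inv_anti₀ (by positivity) ?_
  rcases le_total u 1 with h | h
  · exact (rpow_le_one hu.le h hs₀).trans (one_le_exp hu.le)
  · calc u ^ s ≤ u ^ (1 : ℝ) := rpow_le_rpow_of_exponent_le h hs₁
      _ ≤ exp u := by rw [rpow_one]; linarith [add_one_le_exp u]

lemma exists_besselK_le_mul_rpow {ν s : ℝ} (hνs : |ν| < s) (hs : s ≤ 1) :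
    ∃ C, ∀ x, 0 < x → besselK ν x ≤ C * x ^ (-s) := by
  refine ⟨2 ^ s * ∫ t in Ioi 0, exp (-(s - |ν|) * t), fun x hx => ?_⟩
  have hint : IntegrableOn (fun t => exp (-(s - |ν|) * t)) (Ioi 0) :=
    exp_neg_integrableOn_Ioi 0 (by linarith)
  rw [mul_right_comm, ← integral_const_mul, besselK]
  refine setIntegral_mono_on (integrableOn_besselK_integrand ν hx) (hint.const_mul _)
    measurableSet_Ioi fun t ht => ?_
  -- `x cosh t ≥ x eᵗ / 2`, and `e^{-u} ≤ u^{-s}`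
  have hexp : exp (-x * cosh t) ≤ (x * exp t / 2) ^ (-s) := by
    refine (exp_le_exp.2 ?_).trans
      (exp_neg_le_rpow_neg (by positivity) ((abs_nonneg ν).trans hνs.le) hs)
    rw [cosh_eq]
    nlinarith [exp_pos (-t)]
  calc exp (-x * cosh t) * cosh (ν * t) ≤ (x * exp t / 2) ^ (-s) * exp (|ν| * t) :=
        mul_le_mul hexp (cosh_mul_le_exp ν ht.le) (cosh_pos _).le (by positivity)
    _ = 2 ^ s * x ^ (-s) * exp (-(s - |ν|) * t) := by
        rw [div_rpow (by positivity) zero_le_two, mul_rpow hx.le (exp_pos t).le, ← exp_mul,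
          rpow_neg zero_le_two, div_inv_eq_mul, show -(s - |ν|) * t = t * -s + |ν| * t by ring,
          exp_add]
        ring

lemma besselK_le_exp_mul (ν : ℝ) {x : ℝ} (hx : 1 ≤ x) :
    besselK ν x ≤ exp (1 - x) * besselK ν 1 := by
  rw [besselK, besselK, ← integral_const_mul]
  refine setIntegral_mono_on (integrableOn_besselK_integrand ν (by linarith))
    ((integrableOn_besselK_integrand ν one_pos).const_mul _) measurableSet_Ioi fun t _ => ?_
  rw [← mul_assoc, ← exp_add]
  gcongr
  nlinarith [one_le_cosh t]

def sqrtBesselK (ν x : ℝ) : ℝ := √x * besselK ν x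

lemma sqrtBesselK_pos (ν : ℝ) {x : ℝ} (hx : 0 < x) : 0 < sqrtBesselK ν x :=
  mul_pos (sqrt_pos.2 hx) (besselK_pos ν hx)

lemma hasDerivAt_sqrtBesselK (ν : ℝ) {x : ℝ} (hx : 0 < x) :
    HasDerivAt (sqrtBesselK ν) ((1 / 2 - ν) / x * sqrtBesselK ν x - sqrtBesselK (1 - ν) x) x := by
  refine ((hasDerivAt_sqrt hx.ne').mul (hasDerivAt_besselK ν hx)).congr_deriv ?_
  have hs : √x ^ 2 = x := sq_sqrt hx.le
  have hs₀ : √x ≠ 0 := (sqrt_pos.2 hx).ne'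
  simp only [sqrtBesselK]
  field_simp
  rw [hs]
  ring

lemma integrableOn_sqrtBesselK_sq {ν : ℝ} (hν : |ν| < 1) :
    IntegrableOn (fun x => sqrtBesselK ν x ^ 2) (Ioi 0) := by
  have hcont : ContinuousOn (fun x => sqrtBesselK ν x ^ 2) (Ioi 0) :=
    (HasDerivAt.continuousOn fun x hx => hasDerivAt_sqrtBesselK ν hx).pow 2
  have hsq : ∀ x, 0 < x → sqrtBesselK ν x ^ 2 = x * besselK ν x ^ 2 := fun x hx => by
    rw [sqrtBesselK, mul_pow, sq_sqrt hx.le]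
  rw [← Ioc_union_Ioi_eq_Ioi zero_le_one]
  refine IntegrableOn.union ?_ ?_
  · obtain ⟨C, hC⟩ := exists_besselK_le_mul_rpow (ν := ν) (s := (1 + |ν|) / 2) (by linarith)
      (by linarith)
    have hmaj : IntegrableOn (fun x => C ^ 2 * x ^ (-|ν|)) (Ioc 0 1) :=
      ((intervalIntegrable_iff_integrableOn_Ioc_of_le zero_le_one).1
        (intervalIntegral.intervalIntegrable_rpow' (by linarith))).const_mul _
    refine hmaj.mono' ((hcont.mono Ioc_subset_Ioi_self).aestronglyMeasurable measurableSet_Ioc)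
      ((ae_restrict_iff' measurableSet_Ioc).2 (ae_of_all _ fun x hx => ?_))
    rw [norm_of_nonneg (sq_nonneg _), hsq x hx.1]
    calc x * besselK ν x ^ 2 ≤ x * (C * x ^ (-((1 + |ν|) / 2))) ^ 2 :=
          mul_le_mul_of_nonneg_left (pow_le_pow_left₀ (besselK_pos ν hx.1).le (hC x hx.1) 2)
            hx.1.le
      _ = C ^ 2 * x ^ (-|ν|) := by
          rw [show -|ν| = 1 + -((1 + |ν|) / 2) + -((1 + |ν|) / 2) by ring, rpow_add hx.1,
            rpow_add hx.1, rpow_one]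
          ring
  · refine ((exp_neg_integrableOn_Ioi 1 one_pos).const_mul (exp 2 * besselK ν 1 ^ 2)).mono'
      ((hcont.mono (Ioi_subset_Ioi zero_le_one)).aestronglyMeasurable measurableSet_Ioi)
      ((ae_restrict_iff' measurableSet_Ioi).2 (ae_of_all _ fun x hx => ?_))
    have hx₀ : 0 < x := zero_lt_one.trans hx
    rw [norm_of_nonneg (sq_nonneg _), hsq x hx₀]
    calc x * besselK ν x ^ 2 ≤ exp x * (exp (1 - x) * besselK ν 1) ^ 2 :=
          mul_le_mul (by linarith [add_one_le_exp x])
            (pow_le_pow_left₀ (besselK_pos ν hx₀).le (besselK_le_exp_mul ν hx.le) 2)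
            (by positivity) (exp_pos _).le
      _ = exp 2 * besselK ν 1 ^ 2 * exp (-1 * x) := by
          have : exp x * exp (1 - x) ^ 2 = exp 2 * exp (-1 * x) := by
            rw [← exp_nat_mul, ← exp_add, ← exp_add]
            ring_nf
          linear_combination besselK ν 1 ^ 2 * this

lemma contDiffOn_one_of_hasDerivAt {𝕜 E : Type*} [NontriviallyNormedField 𝕜]
    [NormedAddCommGroup E] [NormedSpace 𝕜 E] {f f' : 𝕜 → E} {s : Set 𝕜} (hs : IsOpen s)
    (hf : ∀ x ∈ s, HasDerivAt f (f' x) x) (hf' : ContinuousOn f' s) : ContDiffOn 𝕜 1 f s := by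
  rw [show (1 : WithTop ℕ∞) = 0 + 1 from rfl, contDiffOn_succ_iff_deriv_of_isOpen hs,
    contDiffOn_zero]
  exact ⟨fun x hx => (hf x hx).differentiableAt.differentiableWithinAt, by simp,
    hf'.congr fun x hx => (hf x hx).deriv⟩

lemma memDeficiency_sqrtBesselK {α : ℝ} (hα : α ∈ Ioo (-(1 / 2) : ℝ) (1 / 2)) :
    MemDeficiency α (fun x => (sqrtBesselK (1 / 2 - α) x : ℂ))
      (fun x => -Complex.I * sqrtBesselK (1 / 2 + α) x) := by
  have hG : ∀ ν, ContinuousOn (sqrtBesselK ν) (Ioi 0) := fun ν =>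
    HasDerivAt.continuousOn fun x hx => hasDerivAt_sqrtBesselK ν hx
  have hdiv : ∀ c : ℝ, ContinuousOn (fun x : ℝ => c / x) (Ioi 0) := fun c =>
    continuousOn_const.div continuousOn_id fun x hx => ne_of_gt hx
  have h₁ : ∀ x ∈ Ioi (0 : ℝ), HasDerivAt (fun x => (sqrtBesselK (1 / 2 - α) x : ℂ))
      ((α / x * sqrtBesselK (1 / 2 - α) x - sqrtBesselK (1 / 2 + α) x : ℝ)) x := fun x hx => by
    have := hasDerivAt_sqrtBesselK (1 / 2 - α) hx
    rw [sub_sub_cancel, show 1 - (1 / 2 - α) = 1 / 2 + α by ring] at this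
    exact this.ofReal_comp
  have h₂ : ∀ x ∈ Ioi (0 : ℝ), HasDerivAt (fun x => -Complex.I * sqrtBesselK (1 / 2 + α) x)
      (-Complex.I * ((-α / x * sqrtBesselK (1 / 2 + α) x - sqrtBesselK (1 / 2 - α) x : ℝ)))
      x := fun x hx => by
    have := hasDerivAt_sqrtBesselK (1 / 2 + α) hx
    rw [show 1 / 2 - (1 / 2 + α) = -α by ring, show 1 - (1 / 2 + α) = 1 / 2 - α by ring] at this
    exact this.ofReal_comp.const_mul _
  refine ⟨contDiffOn_one_of_hasDerivAt isOpen_Ioi h₁ ?_,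
    contDiffOn_one_of_hasDerivAt isOpen_Ioi h₂ ?_, ?_, fun x hx => ⟨?_, ?_⟩⟩
  · exact Complex.continuous_ofReal.comp_continuousOn (((hdiv α).mul (hG _)).sub (hG _))
  · exact continuousOn_const.mul (Complex.continuous_ofReal.comp_continuousOn
      (((hdiv (-α)).mul (hG _)).sub (hG _)))
  · obtain ⟨hα₁, hα₂⟩ := hα
    have h₁ := integrableOn_sqrtBesselK_sq (ν := 1 / 2 - α) (abs_lt.2 ⟨by linarith, by linarith⟩)
    have h₂ := integrableOn_sqrtBesselK_sq (ν := 1 / 2 + α) (abs_lt.2 ⟨by linarith, by linarith⟩)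
    refine (h₁.add h₂).congr_fun (fun x _ => ?_) measurableSet_Ioi
    simp
  · rw [(h₂ x hx).deriv]
    push_cast
    ring
  · rw [(h₁ x hx).deriv]
    push_cast
    linear_combination (sqrtBesselK (1 / 2 + α) x : ℂ) * Complex.I_sq

/-- `τ_α f = i f` is the linear system `f' = diracField α x f`. -/
def diracField (α x : ℝ) : ℂ × ℂ →ₗ[ℂ] ℂ × ℂ where
  toFun p := (((α / x : ℝ) : ℂ) * p.1 - Complex.I * p.2, Complex.I * p.1 - ((α / x : ℝ) : ℂ) * p.2)
  map_add' p q := by ext <;> simp <;> ring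
  map_smul' c p := by ext <;> simp <;> ring

lemma lipschitzWith_diracField (α x : ℝ) :
    LipschitzWith (‖((α / x : ℝ) : ℂ)‖₊ + 1) (diracField α x) := by
  have h₁ := ((lipschitzWith_smul ((α / x : ℝ) : ℂ)).comp LipschitzWith.prod_fst).sub
    ((lipschitzWith_smul Complex.I).comp (LipschitzWith.prod_snd (α := ℂ) (β := ℂ)))
  have h₂ := ((lipschitzWith_smul Complex.I).comp LipschitzWith.prod_fst).sub
    ((lipschitzWith_smul ((α / x : ℝ) : ℂ)).comp (LipschitzWith.prod_snd (α := ℂ) (β := ℂ)))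
  refine (h₁.prodMk h₂).weaken ?_
  simp [add_comm]

lemma MemDeficiency.hasDerivAt_fst {α : ℝ} {f₁ f₂ : ℝ → ℂ} (hf : MemDeficiency α f₁ f₂) {x : ℝ}
    (hx : 0 < x) : HasDerivAt f₁ (((α / x : ℝ) : ℂ) * f₁ x - Complex.I * f₂ x) x := by
  have hd := (hf.1.differentiableOn one_ne_zero).differentiableAt (Ioi_mem_nhds hx)
  exact hd.hasDerivAt.congr_deriv (by linear_combination -(hf.2.2.2 x hx).2)

lemma MemDeficiency.hasDerivAt_snd {α : ℝ} {f₁ f₂ : ℝ → ℂ} (hf : MemDeficiency α f₁ f₂) {x : ℝ}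
    (hx : 0 < x) : HasDerivAt f₂ (Complex.I * f₁ x - ((α / x : ℝ) : ℂ) * f₂ x) x := by
  have hd := (hf.2.1.differentiableOn one_ne_zero).differentiableAt (Ioi_mem_nhds hx)
  exact hd.hasDerivAt.congr_deriv (by linear_combination (hf.2.2.2 x hx).1)

lemma MemDeficiency.hasDerivAt {α : ℝ} {f₁ f₂ : ℝ → ℂ} (hf : MemDeficiency α f₁ f₂) {x : ℝ}
    (hx : 0 < x) : HasDerivAt (fun y => (f₁ y, f₂ y)) (diracField α x (f₁ x, f₂ x)) x :=
  (hf.hasDerivAt_fst hx).prodMk (hf.hasDerivAt_snd hx)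

lemma eqOn_zero_of_hasDerivAt_diracField {α : ℝ} {F : ℝ → ℂ × ℂ}
    (hF : ∀ x ∈ Ioi (0 : ℝ), HasDerivAt F (diracField α x (F x)) x) {x₀ : ℝ} (hx₀ : 0 < x₀)
    (hF₀ : F x₀ = 0) : EqOn F 0 (Ioi 0) := by
  intro x hx
  set a := min x x₀ / 2
  have ha : 0 < a := half_pos (lt_min hx hx₀)
  have hsub : ∀ t ∈ Ioo a (max x x₀ + 1), a ≤ t ∧ 0 < t := fun t ht => ⟨ht.1.le, ha.trans ht.1⟩
  -- on `t ≥ a > 0` the coefficient `α / t` is bounded, so the field is uniformly Lipschitz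
  have hlip : ∀ t ∈ Ioo a (max x x₀ + 1),
      LipschitzOnWith (‖((α / a : ℝ) : ℂ)‖₊ + 1) (diracField α t) univ := fun t ht => by
    refine ((lipschitzWith_diracField α t).weaken ?_).lipschitzOnWith
    obtain ⟨hat, ht₀⟩ := hsub t ht
    gcongr
    rw [← NNReal.coe_le_coe, coe_nnnorm, coe_nnnorm, Complex.norm_real, Complex.norm_real,
      norm_div, norm_div, norm_of_nonneg ht₀.le, norm_of_nonneg ha.le]
    gcongr
  refine ODE_solution_unique_of_mem_Ioo hlip (t₀ := x₀) ?_
    (fun t ht => ⟨hF t (hsub t ht).2, mem_univ _⟩)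
    (fun t _ => ⟨by simp, mem_univ _⟩) hF₀ ?_
  · exact ⟨(min_le_right x x₀).trans_lt' (half_lt_self (lt_min hx hx₀)),
      by linarith [le_max_right x x₀]⟩
  · exact ⟨(min_le_left x x₀).trans_lt' (half_lt_self (lt_min hx hx₀)),
      by linarith [le_max_left x x₀]⟩

lemma eq_zero_of_norm_le_of_integrableOn_Ioi {E : Type*} [NormedAddCommGroup E] {c : E} {a : ℝ}
    {g : ℝ → ℝ} (hg : IntegrableOn g (Ioi a)) (hcg : ∀ x ∈ Ioi a, ‖c‖ ≤ g x) : c = 0 := by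
  have hc : IntegrableOn (fun _ => c) (Ioi a) :=
    hg.mono' aestronglyMeasurable_const ((ae_restrict_iff' measurableSet_Ioi).2 (ae_of_all _ hcg))
  simpa [integrableOn_const_iff] using hc

lemma MemDeficiency.wronskian_eq_zero {α : ℝ} {f₁ f₂ g₁ g₂ : ℝ → ℂ}
    (hf : MemDeficiency α f₁ f₂) (hg : MemDeficiency α g₁ g₂) {x : ℝ} (hx : 0 < x) :
    f₁ x * g₂ x - f₂ x * g₁ x = 0 := by
  set W : ℝ → ℂ := fun y => f₁ y * g₂ y - f₂ y * g₁ y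
  have hW : ∀ y ∈ Ioi (0 : ℝ), HasDerivAt W 0 y := fun y hy => by
    refine (((hf.hasDerivAt_fst hy).mul (hg.hasDerivAt_snd hy)).sub
      ((hf.hasDerivAt_snd hy).mul (hg.hasDerivAt_fst hy))).congr_deriv ?_
    ring
  have hconst : ∀ y ∈ Ioi (0 : ℝ), W y = W 1 := fun y hy =>
    isOpen_Ioi.is_const_of_deriv_eq_zero isPreconnected_Ioi
      (fun y hy => (hW y hy).differentiableAt.differentiableWithinAt)
      (fun y hy => (hW y hy).deriv) hy (mem_Ioi.2 one_pos)
  -- a constant dominated by the integrable `(|f|² + |g|²) / 2` vanishes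
  show W x = 0
  rw [hconst x hx]
  refine eq_zero_of_norm_le_of_integrableOn_Ioi ((hf.2.2.1.add hg.2.2.1).div_const 2)
    fun y hy => ?_
  rw [← hconst y hy]
  calc ‖W y‖ ≤ ‖f₁ y‖ * ‖g₂ y‖ + ‖f₂ y‖ * ‖g₁ y‖ := by
        simpa only [norm_mul] using norm_sub_le (f₁ y * g₂ y) (f₂ y * g₁ y)
    _ ≤ _ := by
        simp only [Pi.add_apply]
        nlinarith [sq_nonneg (‖f₁ y‖ - ‖g₂ y‖), sq_nonneg (‖f₂ y‖ - ‖g₁ y‖)]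

lemma MemDeficiency.eq_mul_of_eq_mul {α : ℝ} {f₁ f₂ g₁ g₂ : ℝ → ℂ}
    (hf : MemDeficiency α f₁ f₂) (hg : MemDeficiency α g₁ g₂) {x₀ : ℝ} (hx₀ : 0 < x₀) {c : ℂ}
    (h₁ : f₁ x₀ = c * g₁ x₀) (h₂ : f₂ x₀ = c * g₂ x₀) {x : ℝ} (hx : 0 < x) :
    f₁ x = c * g₁ x ∧ f₂ x = c * g₂ x := by
  have hF : ∀ y ∈ Ioi (0 : ℝ), HasDerivAt (fun y => (f₁ y, f₂ y) - c • (g₁ y, g₂ y))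
      (diracField α y ((f₁ y, f₂ y) - c • (g₁ y, g₂ y))) y := fun y hy => by
    rw [map_sub, map_smul]
    exact (hf.hasDerivAt hy).sub ((hg.hasDerivAt hy).const_smul c)
  have := eqOn_zero_of_hasDerivAt_diracField hF hx₀ (by simp [h₁, h₂]) hx
  simpa [sub_eq_zero] using this

lemma exists_eq_mul_of_mul_sub_mul_eq_zero {K : Type*} [Field K] {u₁ u₂ v₁ v₂ : K}
    (h : u₁ * v₂ - u₂ * v₁ = 0) (hv : v₁ ≠ 0 ∨ v₂ ≠ 0) : ∃ c, u₁ = c * v₁ ∧ u₂ = c * v₂ := by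
  rcases hv with hv | hv
  · refine ⟨u₁ / v₁, by field_simp, ?_⟩
    field_simp
    linear_combination -h
  · refine ⟨u₂ / v₂, ?_, by field_simp⟩
    field_simp
    linear_combination h

/-- One-dimensionality of the deficiency space on the half-line in the subcritical range
(core of Proposition 3.4 (iii)): for `α ∈ (−1/2, 1/2)` the deficiency space `S` contains a
nonzero element, and any two elements of `S` are linearly dependent over `ℂ`. -/
theorem deficiency_one_dimensional_halfline (α : ℝ) (hα : α ∈ Ioo (-(1 / 2) : ℝ) (1 / 2)) :
    (∃ f₁ f₂ : ℝ → ℂ, MemDeficiency α f₁ f₂ ∧ ∃ x ∈ Ioi (0 : ℝ), (f₁ x ≠ 0 ∨ f₂ x ≠ 0))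
    ∧ ∀ f₁ f₂ g₁ g₂ : ℝ → ℂ, MemDeficiency α f₁ f₂ → MemDeficiency α g₁ g₂ →
        ∃ c d : ℂ, ¬(c = 0 ∧ d = 0) ∧
          ∀ x ∈ Ioi (0 : ℝ), c * f₁ x + d * g₁ x = 0 ∧ c * f₂ x + d * g₂ x = 0 := by
  refine ⟨⟨_, _, memDeficiency_sqrtBesselK hα, 1, mem_Ioi.2 one_pos,
    Or.inl (Complex.ofReal_ne_zero.2 (sqrtBesselK_pos _ one_pos).ne')⟩,
    fun f₁ f₂ g₁ g₂ hf hg => ?_⟩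
  by_cases hg₀ : ∀ x ∈ Ioi (0 : ℝ), g₁ x = 0 ∧ g₂ x = 0
  · exact ⟨0, 1, by simp, fun x hx => by simp [hg₀ x hx]⟩
  simp only [not_forall, not_and_or] at hg₀
  obtain ⟨x₀, hx₀, hgx₀⟩ := hg₀
  obtain ⟨c, hc₁, hc₂⟩ := exists_eq_mul_of_mul_sub_mul_eq_zero (hf.wronskian_eq_zero hg hx₀) hgx₀
  refine ⟨1, -c, by simp, fun x hx => ?_⟩
  obtain ⟨h₁, h₂⟩ := hf.eq_mul_of_eq_mul hg hx₀ hc₁ hc₂ hx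
  exact ⟨by rw [h₁]; ring, by rw [h₂]; ring⟩

end
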